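/- arXiv:2212.13189 — 2 statements merged into one kernel-verified Lean document; each statement's English description precedes it below -/
import Mathlib

section
/- For the framework of Example 3.3(a) with vertices p₁=(1,2), p₂=(-1,1), p₃=(-1,-1), p₄=(2,-1), p₅=(0,0) and edges {1,2},{2,3},{3,4},{4,1},{1,5},{2,5},{3,5},{4,5}, the assignment w({1,2}) = w({3,4}) = 0 is NOT forced: there exists a self-stress w with w({1,5}) ≠ 0. -/
/-- The primitive integer vector in the direction of `u`. -/
def primVec {d : ℕ} (u : Fin d → ℤ) : Fin d → ℤ :=
  fun i => u i / Finset.univ.gcd u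

/-- Vertex placement of Example 3.3(a). -/
def pA : Fin 5 → Fin 2 → ℤ := ![![1,2], ![-1,1], ![-1,-1], ![2,-1], ![0,0]]

/-- Edges of Example 3.3(a), 1-based. -/
def edgesA : List (ℕ × ℕ) := [(1,2),(2,3),(3,4),(4,1),(1,5),(2,5),(3,5),(4,5)]

/-- Adjacency relation of Example 3.3(a). -/
def AdjA (i j : Fin 5) : Prop :=
  (i.val + 1, j.val + 1) ∈ edgesA ∨ (j.val + 1, i.val + 1) ∈ edgesA

instance : ∀ i, DecidablePred (AdjA i) := fun _ _ => by unfold AdjA; infer_instance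

/-- Self-stress: symmetric, supported on edges, balanced at each vertex. -/
def SelfStressA (w : Fin 5 → Fin 5 → ℚ) : Prop :=
  (∀ i j, w i j = w j i) ∧ (∀ i j, ¬ AdjA i j → w i j = 0) ∧
    ∀ i, ∑ j ∈ Finset.univ.filter (AdjA i),
      w i j • (fun k => (primVec (pA j - pA i) k : ℚ)) = (0 : Fin 2 → ℚ)

/- The equilibrium conditions are 10 linear equations in the 8 edge weights, of rank 7, so the
self-stresses form a line; `stressA` spans it. Its weights are integers, so equilibrium can be
checked by evaluation over `ℤ`. -/
def stressA : Fin 5 → Fin 5 → ℤ :=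
  ![![0, 5, 0, 3, -7], ![5, 0, 15, 0, -10], ![0, 15, 0, 15, -15], ![3, 0, 15, 0, -9],
    ![-7, -10, -15, -9, 0]]

lemma selfStressA_intCast (w : Fin 5 → Fin 5 → ℤ) (hsymm : ∀ i j, w i j = w j i)
    (hsupp : ∀ i j, ¬ AdjA i j → w i j = 0)
    (hbal : ∀ i, ∑ j ∈ Finset.univ.filter (AdjA i), w i j • primVec (pA j - pA i) = 0) :
    SelfStressA (fun i j => w i j) := by
  refine ⟨fun i j => by simp only [hsymm i j], fun i j h => by simp [hsupp i j h], fun i => ?_⟩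
  ext k
  simpa using congrArg (fun v : Fin 2 → ℤ => (v k : ℚ)) (hbal i)

/-- for the framework of Example 3.3(a), there exists a self-stress `w`
which is nonzero on the spoke edge `{1,5}`; in particular `w({1,2}) = w({3,4}) = 0` is
not forced. -/
theorem exampleA_exists_selfStress_nonzero_on_spoke :
    ∃ w : Fin 5 → Fin 5 → ℚ, SelfStressA w ∧ w 0 4 ≠ 0 :=
  ⟨fun i j => stressA i j, selfStressA_intCast stressA (by decide) (by decide) (by decide),
    by simp [stressA]⟩
end

section
/- The map sending a Minkowski-type weight c on the set of lifted edges to the stress w(f) := c(ray over f) is a ℚ-linear isomorphism between the space of weights c : E(G) → ℚ satisfying, for every vertex i and every (m,t) ∈ ℤ³ with ⟨m,p_i⟩ + t = 0, the relation ∑_{j ~ i} c({i,j}) ⟨(m,t), (p_i + (p_j-p_i)^prim, 1)⟩ = 0, and the space of self-stresses on the planar framework (V, E, p). -/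
/-! Both spaces consist of the same functions. At a vertex `i`, the constraint
`⟨m, p_i⟩ + t = 0` makes the lifted pairing `⟨(m,t), (p_i + u, 1)⟩` collapse to `⟨m, u⟩`, so the
Minkowski relations say exactly that every integer functional `m` kills the stress sum
`∑_j c_{ij} (p_j - p_i)^prim`; testing against the coordinate functionals (with
`t = -(p_i)_k`) shows this sum vanishes. -/

open Finset

lemma lifted_pairing_eq_pairing {d : ℕ} {m x : Fin d → ℤ} {t : ℤ}
    (h : ∑ k, m k * x k + t = 0) (u : Fin d → ℤ) :
    ∑ k, m k * (x k + u k) + t * 1 = ∑ k, m k * u k := by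
  simp only [mul_add, sum_add_distrib]
  linarith

theorem forall_lifted_pairing_eq_zero_iff_sum_smul_eq_zero {ι : Type*} {d : ℕ}
    (s : Finset ι) (a : ι → ℚ) (x : Fin d → ℤ) (u : ι → Fin d → ℤ) :
    (∀ (m : Fin d → ℤ) (t : ℤ), ∑ k, m k * x k + t = 0 →
      ∑ j ∈ s, a j * ((∑ k, m k * (x k + u j k) + t * 1 : ℤ) : ℚ) = 0) ↔
    ∑ j ∈ s, a j • (fun k => (u j k : ℚ)) = 0 := by
  constructor
  · intro h
    funext k
    have hk : ∑ l, (Pi.single k 1 : Fin d → ℤ) l * x l + -x k = 0 := by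
      simp [Pi.single_apply, ite_mul]
    have hsum := h _ _ hk
    simp_rw [lifted_pairing_eq_pairing hk] at hsum
    simpa [Pi.single_apply, ite_mul] using hsum
  · intro h m t ht
    simp_rw [lifted_pairing_eq_pairing ht]
    calc ∑ j ∈ s, a j * ((∑ k, m k * u j k : ℤ) : ℚ)
        = ∑ k, (m k : ℚ) * (∑ j ∈ s, a j • (fun k => (u j k : ℚ))) k := by
          simp only [Int.cast_sum, Int.cast_mul, mul_sum, Finset.sum_apply, Pi.smul_apply,
            smul_eq_mul]
          rw [sum_comm]
          exact sum_congr rfl fun _ _ => sum_congr rfl fun _ _ => by ring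
      _ = 0 := by rw [h]; simp

theorem minkowski_weights_equiv_selfStresses_general {V : Type} [Fintype V]
    (Adj : V → V → Prop) [∀ i, DecidablePred (Adj i)]
    (p : V → Fin 2 → ℤ)
    (W : Submodule ℚ (V → V → ℚ))
    (hW : ∀ c, c ∈ W ↔ ((∀ i j, c i j = c j i) ∧ (∀ i j, ¬ Adj i j → c i j = 0) ∧
      ∀ i : V, ∀ (m : Fin 2 → ℤ) (t : ℤ), (∑ k, m k * p i k) + t = 0 →
        ∑ j ∈ Finset.univ.filter (Adj i),
          c i j * (((∑ k, m k * (p i k + primVec (p j - p i) k)) + t * 1 : ℤ) : ℚ) = 0))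
    (S : Submodule ℚ (V → V → ℚ))
    (hS : ∀ w, w ∈ S ↔ ((∀ i j, w i j = w j i) ∧ (∀ i j, ¬ Adj i j → w i j = 0) ∧
      ∀ i : V, ∑ j ∈ Finset.univ.filter (Adj i),
        w i j • (fun k => (primVec (p j - p i) k : ℚ)) = (0 : Fin 2 → ℚ))) :
    ∃ φ : W ≃ₗ[ℚ] S, ∀ c : W, ((φ c : V → V → ℚ)) = (c : V → V → ℚ) := by
  have hWS : W = S := by
    ext c
    rw [hW, hS]
    exact and_congr_right' <| and_congr_right' <| forall_congr' fun i =>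
      forall_lifted_pairing_eq_zero_iff_sum_smul_eq_zero _ (c i) (p i)
        fun j => primVec (p j - p i)
  exact ⟨LinearEquiv.ofEq W S hWS, fun _ => rfl⟩

/-- Proposition 3.2: the map `c ↦ (w : f ↦ c(ray over f))` is a
ℚ-linear isomorphism between the space of Minkowski-type weights on the lifted edges
(weights `c` satisfying, at each vertex `i` and each `(m,t) ∈ ℤ³` with `⟨m,p_i⟩+t = 0`,
the relation `∑_{j~i} c({i,j})⟨(m,t),(p_i+(p_j-p_i)^prim,1)⟩ = 0`) and the space of
self-stresses of the planar framework. -/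
theorem minkowski_weights_equiv_selfStresses {V : Type} [Fintype V] [DecidableEq V]
    (Adj : V → V → Prop) [∀ i, DecidablePred (Adj i)] (hsym : ∀ i j, Adj i j → Adj j i)
    (p : V → Fin 2 → ℤ) (hinj : Function.Injective p)
    (W : Submodule ℚ (V → V → ℚ))
    (hW : ∀ c, c ∈ W ↔ ((∀ i j, c i j = c j i) ∧ (∀ i j, ¬ Adj i j → c i j = 0) ∧
      ∀ i : V, ∀ (m : Fin 2 → ℤ) (t : ℤ), (∑ k, m k * p i k) + t = 0 →
        ∑ j ∈ Finset.univ.filter (Adj i),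
          c i j * (((∑ k, m k * (p i k + primVec (p j - p i) k)) + t * 1 : ℤ) : ℚ) = 0))
    (S : Submodule ℚ (V → V → ℚ))
    (hS : ∀ w, w ∈ S ↔ ((∀ i j, w i j = w j i) ∧ (∀ i j, ¬ Adj i j → w i j = 0) ∧
      ∀ i : V, ∑ j ∈ Finset.univ.filter (Adj i),
        w i j • (fun k => (primVec (p j - p i) k : ℚ)) = (0 : Fin 2 → ℚ))) :
    ∃ φ : W ≃ₗ[ℚ] S, ∀ c : W, ((φ c : V → V → ℚ)) = (c : V → V → ℚ) :=
  minkowski_weights_equiv_selfStresses_general Adj p W hW S hS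
end
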